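/- Suppose F̂ satisfies the L²-Lipschitz random field condition ‖F̂(x₁, ξ_{x₂}) - F̂(y₁, ξ_{y₂})‖_{L²} ≤ (L̄/2)(‖x₁-y₁‖ + ‖x₂-y₂‖). Let x̄_η be an η-smoothed performatively stable point, i.e., x̄_η ∈ argmin_{x ∈ X} E_ξ E_{Z_η}[F̂(x - Z_η, ξ_{x̄_η - Z_η})], where Z_η has density φ_η = density of 𝒩(0, η²I). If η ≤ ε/(2L̄√(n+1)), then f(x̄_η) ≤ E_{ξ ~ 𝒟(x̄_η)}[F̂(x, ξ)] + ε for all x ∈ X, i.e., x̄_η is an ε-performatively stable point of the original decision-dependent problem min_x f(x) = E_{ξ~𝒟(x)}[F̂(x,ξ)]. -/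

import Mathlib

open MeasureTheory

/-- The density of the Gaussian `𝒩(0, η²I)` on `ℝⁿ`. -/
noncomputable def gaussPdf (n : ℕ) (η : ℝ) (z : EuclideanSpace ℝ (Fin n)) : ℝ :=
  (2 * Real.pi * η ^ 2) ^ (-(n : ℝ) / 2) * Real.exp (-‖z‖ ^ 2 / (2 * η ^ 2))

namespace GaussSmoothAux

open Real Filter Topology

lemma integral_sq_mul_exp_neg_mul_sq {b : ℝ} (hb : 0 < b) :
    ∫ x : ℝ, x ^ 2 * Real.exp (-b * x ^ 2) = (2 * b)⁻¹ * Real.sqrt (π / b) := by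
  have hb' : (b:ℝ) ≠ 0 := ne_of_gt hb
  have hInt2 : Integrable (fun x : ℝ => x ^ 2 * Real.exp (-b * x ^ 2)) := by
    have := integrable_rpow_mul_exp_neg_mul_sq hb (s := 2) (by norm_num)
    have h2 : ∀ x : ℝ, x ^ (2:ℝ) = x ^ 2 := fun x => by
      rw [show ((2:ℝ) = ((2:ℕ):ℝ)) by norm_num, Real.rpow_natCast]
    simpa [h2] using this
  have hderiv : ∀ x : ℝ, HasDerivAt (fun x : ℝ => (2*b)⁻¹ * (x * Real.exp (-b * x ^ 2)))
      ((2*b)⁻¹ * Real.exp (-b * x ^ 2) - x ^ 2 * Real.exp (-b * x ^ 2)) x := by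
    intro x
    have h1 : HasDerivAt (fun x : ℝ => Real.exp (-b * x ^ 2))
        (Real.exp (-b * x ^ 2) * (-b * (2 * x ^ 1))) x := by
      simpa using (((hasDerivAt_pow 2 x).const_mul (-b)).exp)
    have h2 := (hasDerivAt_id' (x := x)).mul h1
    have h3 := h2.const_mul ((2*b)⁻¹)
    refine h3.congr_deriv ?_
    have hbb : (2*b)⁻¹ * (2*b) = 1 := inv_mul_cancel₀ (by positivity)
    linear_combination (-(x ^ 2 * Real.exp (-b * x ^ 2))) * hbb
  have h2top : Tendsto (fun x : ℝ => x * Real.exp (-b * x ^ 2)) atTop (𝓝 0) := by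
    have h0 : Tendsto (fun x : ℝ => Real.exp (-(1/2) * x)) atTop (𝓝 0) := by
      apply Real.tendsto_exp_atBot.comp
      exact Tendsto.const_mul_atTop_of_neg (by norm_num) tendsto_id
    have h1 := (rpow_mul_exp_neg_mul_sq_isLittleO_exp_neg hb 1).trans_tendsto h0
    simpa [Real.rpow_one] using h1
  have htop : Tendsto (fun x : ℝ => (2*b)⁻¹ * (x * Real.exp (-b * x ^ 2))) atTop (𝓝 0) := by
    simpa using h2top.const_mul ((2*b)⁻¹)
  have hbot : Tendsto (fun x : ℝ => (2*b)⁻¹ * (x * Real.exp (-b * x ^ 2))) atBot (𝓝 0) := by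
    have h3 := h2top.comp (tendsto_neg_atBot_atTop : Tendsto (fun x : ℝ => -x) atBot atTop)
    have h4 : Tendsto (fun x : ℝ => -(x * Real.exp (-b * x ^ 2))) atBot (𝓝 0) := by
      simpa [Function.comp_def, neg_mul] using h3
    have h5 : Tendsto (fun x : ℝ => x * Real.exp (-b * x ^ 2)) atBot (𝓝 0) := by
      simpa using h4.neg
    simpa using h5.const_mul ((2*b)⁻¹)
  have hIntSub : Integrable (fun x : ℝ =>
      (2*b)⁻¹ * Real.exp (-b * x ^ 2) - x ^ 2 * Real.exp (-b * x ^ 2)) :=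
    ((integrable_exp_neg_mul_sq hb).const_mul ((2*b)⁻¹)).sub hInt2
  have h0 := integral_of_hasDerivAt_of_tendsto hderiv hIntSub hbot htop
  have h5 : (∫ x : ℝ, ((2*b)⁻¹ * Real.exp (-b * x ^ 2) - x ^ 2 * Real.exp (-b * x ^ 2))) = 0 := by
    simpa using h0
  rw [integral_sub ((integrable_exp_neg_mul_sq hb).const_mul ((2*b)⁻¹)) hInt2,
    integral_const_mul, integral_gaussian] at h5
  linarith

/-- The one-dimensional Gaussian density. -/
noncomputable def g1 (η : ℝ) (x : ℝ) : ℝ :=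
  (2 * Real.pi * η ^ 2) ^ (-(1:ℝ) / 2) * Real.exp (-(2 * η ^ 2)⁻¹ * x ^ 2)

variable {n : ℕ} {η : ℝ}

lemma hb_pos (hη : 0 < η) : 0 < (2 * η ^ 2)⁻¹ := by positivity

lemma integrable_g1 (hη : 0 < η) : Integrable (g1 η) :=
  (integrable_exp_neg_mul_sq (hb_pos hη)).const_mul _

lemma const_sqrt (hη : 0 < η) :
    Real.sqrt (π / (2 * η ^ 2)⁻¹) = (2 * Real.pi * η ^ 2) ^ ((1:ℝ) / 2) := by
  have h1 : π / (2 * η ^ 2)⁻¹ = 2 * Real.pi * η ^ 2 := by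
    field_simp
  rw [h1]; exact Real.sqrt_eq_rpow _

lemma integral_g1 (hη : 0 < η) : ∫ x, g1 η x = 1 := by
  have hA : (0:ℝ) < 2 * Real.pi * η ^ 2 := by positivity
  simp only [g1]
  rw [integral_const_mul, integral_gaussian, const_sqrt hη, ← Real.rpow_add hA]
  norm_num

lemma integrable_sq_g1 (hη : 0 < η) : Integrable (fun x => x ^ 2 * g1 η x) := by
  have : Integrable (fun x : ℝ => x ^ 2 * Real.exp (-(2 * η ^ 2)⁻¹ * x ^ 2)) := by
    have := integrable_rpow_mul_exp_neg_mul_sq (hb_pos hη) (s := 2) (by norm_num)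
    have h2 : ∀ x : ℝ, x ^ (2:ℝ) = x ^ 2 := fun x => by
      rw [show ((2:ℝ) = ((2:ℕ):ℝ)) by norm_num, Real.rpow_natCast]
    simpa [h2] using this
  have h := this.const_mul ((2 * Real.pi * η ^ 2) ^ (-(1:ℝ) / 2))
  simp only [g1]
  convert h using 2 with x
  ring

lemma integral_sq_g1 (hη : 0 < η) : ∫ x, x ^ 2 * g1 η x = η ^ 2 := by
  have hA : (0:ℝ) < 2 * Real.pi * η ^ 2 := by positivity
  have key := integral_sq_mul_exp_neg_mul_sq (hb_pos hη)
  have hcomm : ∀ x : ℝ, x ^ 2 * g1 η x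
      = (2 * Real.pi * η ^ 2) ^ (-(1:ℝ) / 2) * (x ^ 2 * Real.exp (-(2 * η ^ 2)⁻¹ * x ^ 2)) := by
    intro x; simp only [g1]; ring
  simp only [hcomm]
  rw [integral_const_mul, key, const_sqrt hη]
  rw [show (2 * (2 * η ^ 2)⁻¹)⁻¹ = η ^ 2 by field_simp]
  rw [show (2 * Real.pi * η ^ 2) ^ (-(1:ℝ) / 2) * (η ^ 2 * (2 * Real.pi * η ^ 2) ^ ((1:ℝ) / 2))
      = η ^ 2 * ((2 * Real.pi * η ^ 2) ^ (-(1:ℝ) / 2) * (2 * Real.pi * η ^ 2) ^ ((1:ℝ) / 2)) by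
        ring,
    ← Real.rpow_add hA]
  norm_num

lemma symm_apply (y : Fin n → ℝ) (i : Fin n) :
    ((MeasurableEquiv.toLp 2 (Fin n → ℝ)).symm).symm y i = y i := by
  simp [MeasurableEquiv.symm_mk, MeasurableEquiv.coe_mk]

lemma norm_symm_sq (y : Fin n → ℝ) :
    ‖((MeasurableEquiv.toLp 2 (Fin n → ℝ)).symm).symm y‖ ^ 2 = ∑ i, y i ^ 2 := by
  rw [EuclideanSpace.norm_eq, Real.sq_sqrt (by positivity)]
  simp [symm_apply]

lemma gaussPdf_prod (hη : 0 < η) (y : Fin n → ℝ) :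
    gaussPdf n η (((MeasurableEquiv.toLp 2 (Fin n → ℝ)).symm).symm y) = ∏ i, g1 η (y i) := by
  have hA : (0:ℝ) < 2 * Real.pi * η ^ 2 := by positivity
  simp only [gaussPdf, g1, norm_symm_sq]
  rw [Finset.prod_mul_distrib, Finset.prod_const, ← Real.exp_sum,
    show ((-(n:ℝ))/2 : ℝ) = (-(1:ℝ)/2) * (n:ℕ) by ring,
    Real.rpow_mul hA.le, Real.rpow_natCast]
  congr 2
  · simp [Finset.card_univ]
  · rw [neg_div, Finset.sum_div]
    rw [← Finset.sum_neg_distrib]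
    congr 1 with i
    field_simp

lemma gaussPdf_nonneg (z : EuclideanSpace ℝ (Fin n)) : 0 ≤ gaussPdf n η z := by
  unfold gaussPdf; positivity

lemma gaussPdf_continuous : Continuous (gaussPdf n η) := by
  unfold gaussPdf
  exact continuous_const.mul (((continuous_norm.pow 2).neg.div_const _).rexp)

lemma integrable_gaussPdf (hη : 0 < η) : Integrable (gaussPdf n η) := by
  have hmp := (EuclideanSpace.volume_preserving_symm_measurableEquiv_toLp (Fin n)).symm
  rw [← hmp.integrable_comp_emb (MeasurableEquiv.measurableEmbedding _)]
  have : (gaussPdf n η ∘ ((MeasurableEquiv.toLp 2 (Fin n → ℝ)).symm).symm)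
      = fun y : Fin n → ℝ => ∏ i, g1 η (y i) := funext fun y => gaussPdf_prod hη y
  rw [this]
  exact Integrable.fintype_prod (fun _ => integrable_g1 hη)

lemma integral_gaussPdf (hη : 0 < η) : ∫ z, gaussPdf n η z = 1 := by
  have hmp := (EuclideanSpace.volume_preserving_symm_measurableEquiv_toLp (Fin n)).symm
  rw [← hmp.integral_comp (MeasurableEquiv.measurableEmbedding _)]
  simp_rw [gaussPdf_prod hη]
  rw [volume_pi, integral_fintype_prod_eq_prod (𝕜 := ℝ) (fun _ => g1 η)]
  simp [integral_g1 hη]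

lemma prod_term_integrable (hη : 0 < η) (i : Fin n) :
    Integrable (fun y : Fin n → ℝ => ∏ j, ((if j = i then (y j) ^ 2 else 1) * g1 η (y j))) := by
  apply Integrable.fintype_prod (f := fun j x => (if j = i then x ^ 2 else 1) * g1 η x)
  intro j
  by_cases h : j = i
  · simpa [h] using integrable_sq_g1 hη
  · simpa [h] using integrable_g1 hη

lemma integrable_sq_gaussPdf (hη : 0 < η) :
    Integrable (fun z : EuclideanSpace ℝ (Fin n) => ‖z‖ ^ 2 * gaussPdf n η z) := by
  have hmp := (EuclideanSpace.volume_preserving_symm_measurableEquiv_toLp (Fin n)).symm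
  rw [← hmp.integrable_comp_emb (MeasurableEquiv.measurableEmbedding _)]
  have heq : ((fun z : EuclideanSpace ℝ (Fin n) => ‖z‖ ^ 2 * gaussPdf n η z)
      ∘ ((MeasurableEquiv.toLp 2 (Fin n → ℝ)).symm).symm)
      = fun y : Fin n → ℝ => ∑ i, ∏ j, ((if j = i then (y j) ^ 2 else 1) * g1 η (y j)) := by
    funext y
    simp only [Function.comp_apply, norm_symm_sq, gaussPdf_prod hη]
    rw [Finset.sum_mul]
    congr 1 with i
    rw [Finset.prod_mul_distrib]
    congr 1
    rw [Finset.prod_eq_single i (fun b _ hb => if_neg hb) (by simp)]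
    simp
  rw [heq]
  exact integrable_finset_sum _ (fun i _ => prod_term_integrable hη i)

lemma integral_sq_gaussPdf (hη : 0 < η) :
    ∫ z : EuclideanSpace ℝ (Fin n), ‖z‖ ^ 2 * gaussPdf n η z = n * η ^ 2 := by
  have hmp := (EuclideanSpace.volume_preserving_symm_measurableEquiv_toLp (Fin n)).symm
  rw [← hmp.integral_comp (MeasurableEquiv.measurableEmbedding _)]
  have heq : ∀ y : Fin n → ℝ,
      ‖((MeasurableEquiv.toLp 2 (Fin n → ℝ)).symm).symm y‖ ^ 2
        * gaussPdf n η (((MeasurableEquiv.toLp 2 (Fin n → ℝ)).symm).symm y)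
      = ∑ i, ∏ j, ((if j = i then (y j) ^ 2 else 1) * g1 η (y j)) := by
    intro y
    rw [norm_symm_sq, gaussPdf_prod hη, Finset.sum_mul]
    congr 1 with i
    rw [Finset.prod_mul_distrib]
    congr 1
    rw [Finset.prod_eq_single i (fun b _ hb => if_neg hb) (by simp)]
    simp
  simp_rw [heq]
  rw [integral_finset_sum _ (fun i _ => prod_term_integrable hη i)]
  have : ∀ i : Fin n, (∫ y : Fin n → ℝ, ∏ j, ((if j = i then (y j) ^ 2 else 1) * g1 η (y j)))
      = η ^ 2 := by
    intro i
    rw [volume_pi, integral_fintype_prod_eq_prod (𝕜 := ℝ)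
      (fun j x => (if j = i then x ^ 2 else 1) * g1 η x)]
    rw [Finset.prod_eq_single i (fun b _ hb => by simp [if_neg hb, integral_g1 hη]) (by simp)]
    simpa using integral_sq_g1 hη
  simp_rw [this]
  simp [mul_comm]

lemma bound_integrable (hη : 0 < η) {a : ℝ} (_ : 0 < a) :
    Integrable (fun z : EuclideanSpace ℝ (Fin n) =>
      (2 * a)⁻¹ * (‖z‖ ^ 2 * gaussPdf n η z) + a / 2 * gaussPdf n η z) :=
  ((integrable_sq_gaussPdf hη).const_mul _).add ((integrable_gaussPdf hη).const_mul _)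

lemma pointwise_bound (hη : 0 < η) {a : ℝ} (ha : 0 < a) (z : EuclideanSpace ℝ (Fin n)) :
    ‖z‖ * gaussPdf n η z ≤
      (2 * a)⁻¹ * (‖z‖ ^ 2 * gaussPdf n η z) + a / 2 * gaussPdf n η z := by
  have hp := gaussPdf_nonneg (η := η) z
  have key : (2 * a)⁻¹ * (‖z‖ ^ 2 * gaussPdf n η z) + a / 2 * gaussPdf n η z
      - ‖z‖ * gaussPdf n η z = (2 * a)⁻¹ * ((‖z‖ - a) ^ 2 * gaussPdf n η z) := by
    field_simp
    ring
  nlinarith [mul_nonneg (mul_nonneg (by positivity : (0:ℝ) ≤ (2*a)⁻¹)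
    (sq_nonneg (‖z‖ - a))) hp, mul_nonneg (sq_nonneg (‖z‖ - a)) hp]

lemma integrable_norm_gaussPdf (hη : 0 < η) :
    Integrable (fun z : EuclideanSpace ℝ (Fin n) => ‖z‖ * gaussPdf n η z) := by
  refine (bound_integrable hη (one_pos)).mono'
    ((continuous_norm.mul gaussPdf_continuous).aestronglyMeasurable) ?_
  filter_upwards with z
  rw [Real.norm_eq_abs, abs_of_nonneg (mul_nonneg (norm_nonneg _) (gaussPdf_nonneg z))]
  exact pointwise_bound hη one_pos z

lemma integral_norm_gaussPdf (hη : 0 < η) :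
    ∫ z : EuclideanSpace ℝ (Fin n), ‖z‖ * gaussPdf n η z ≤ η * Real.sqrt (n + 1) := by
  set s := Real.sqrt ((n : ℝ) + 1) with hs_def
  have hs : 0 < s := Real.sqrt_pos.2 (by positivity)
  have hs2 : s ^ 2 = (n : ℝ) + 1 := Real.sq_sqrt (by positivity)
  set a := η * s with ha_def
  have ha : 0 < a := by positivity
  have h1 : ∫ z : EuclideanSpace ℝ (Fin n), ‖z‖ * gaussPdf n η z ≤
      ∫ z : EuclideanSpace ℝ (Fin n),
        ((2 * a)⁻¹ * (‖z‖ ^ 2 * gaussPdf n η z) + a / 2 * gaussPdf n η z) :=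
    integral_mono (integrable_norm_gaussPdf hη) (bound_integrable hη ha)
      (fun z => pointwise_bound hη ha z)
  have h2 : ∫ z : EuclideanSpace ℝ (Fin n),
      ((2 * a)⁻¹ * (‖z‖ ^ 2 * gaussPdf n η z) + a / 2 * gaussPdf n η z)
      = (2 * a)⁻¹ * ((n : ℝ) * η ^ 2) + a / 2 := by
    rw [integral_add ((integrable_sq_gaussPdf hη).const_mul _)
        ((integrable_gaussPdf hη).const_mul _), integral_const_mul, integral_const_mul,
      integral_sq_gaussPdf hη, integral_gaussPdf hη, mul_one]
  have h3 : (2 * a)⁻¹ * ((n : ℝ) * η ^ 2) ≤ η * s / 2 := by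
    rw [mul_comm, ← div_eq_mul_inv, div_le_iff₀ (by positivity)]
    nlinarith [sq_nonneg η]
  have h4 : η * s / 2 + a / 2 = η * s := by rw [ha_def]; ring
  linarith

end GaussSmoothAux

/-- An `η`-smoothed performatively stable point is an `ε`-performatively stable point of the
original decision-dependent problem when `η ≤ ε / (2 L̄ √(n+1))`: under the random-field L²
Lipschitz condition `‖F̂(x₁, ξ_{x₂}) - F̂(y₁, ξ_{y₂})‖_{L²} ≤ (L̄/2)(‖x₁-y₁‖ + ‖x₂-y₂‖)`
(realized via couplings `γ x₂ y₂` of `𝒟(x₂)` and `𝒟(y₂)`), if `x̄_η` minimizes over `X` the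
smoothed objective `x ↦ E_{Z_η} E_{ξ ~ 𝒟(x̄_η - Z_η)}[F̂(x - Z_η, ξ)]` with `Z_η ~ 𝒩(0, η²I)`,
then `f(x̄_η) ≤ E_{ξ ~ 𝒟(x̄_η)}[F̂(x, ξ)] + ε` for all `x ∈ X`. -/
theorem eta_smoothed_stable_is_eps_stable {n : ℕ} {Ω : Type*} [MeasurableSpace Ω]
    (D : EuclideanSpace ℝ (Fin n) → Measure Ω)
    (hD : ∀ x, IsProbabilityMeasure (D x))
    (Fhat : EuclideanSpace ℝ (Fin n) → Ω → ℝ)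
    (hFmeas : ∀ x, Measurable (Fhat x))
    (hFint : ∀ x y : EuclideanSpace ℝ (Fin n), Integrable (fun ω => Fhat x ω) (D y))
    (γ : EuclideanSpace ℝ (Fin n) → EuclideanSpace ℝ (Fin n) → Measure (Ω × Ω))
    (hγ : ∀ x y, IsProbabilityMeasure (γ x y))
    (hfst : ∀ x y, (γ x y).map Prod.fst = D x)
    (hsnd : ∀ x y, (γ x y).map Prod.snd = D y)
    (hsq : ∀ x₁ y₁ x₂ y₂, Integrable
      (fun w : Ω × Ω => (Fhat x₁ w.1 - Fhat y₁ w.2) ^ 2) (γ x₂ y₂))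
    (Lbar ε η : ℝ) (hLbar : 0 < Lbar) (hε : 0 < ε) (hη : 0 < η)
    (hL : ∀ x₁ y₁ x₂ y₂ : EuclideanSpace ℝ (Fin n),
      Real.sqrt (∫ w : Ω × Ω, (Fhat x₁ w.1 - Fhat y₁ w.2) ^ 2 ∂(γ x₂ y₂)) ≤
        Lbar / 2 * (‖x₁ - y₁‖ + ‖x₂ - y₂‖))
    (X : Set (EuclideanSpace ℝ (Fin n))) (xbar : EuclideanSpace ℝ (Fin n))
    (hmem : xbar ∈ X)
    (hGint : ∀ x : EuclideanSpace ℝ (Fin n), Integrable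
      (fun z : EuclideanSpace ℝ (Fin n) =>
        (∫ ω, Fhat (x - z) ω ∂(D (xbar - z))) * gaussPdf n η z))
    (hstable : ∀ x ∈ X,
      (∫ z : EuclideanSpace ℝ (Fin n),
        (∫ ω, Fhat (xbar - z) ω ∂(D (xbar - z))) * gaussPdf n η z) ≤
      ∫ z : EuclideanSpace ℝ (Fin n),
        (∫ ω, Fhat (x - z) ω ∂(D (xbar - z))) * gaussPdf n η z)
    (hηle : η ≤ ε / (2 * Lbar * Real.sqrt (n + 1))) :
    ∀ x ∈ X, (∫ ω, Fhat xbar ω ∂(D xbar)) ≤ (∫ ω, Fhat x ω ∂(D xbar)) + ε := by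
  classical
  -- Step 1: the coupling estimate.
  have coupling : ∀ (x' z : EuclideanSpace ℝ (Fin n)),
      |(∫ ω, Fhat (x' - z) ω ∂(D (xbar - z))) - ∫ ω, Fhat x' ω ∂(D xbar)| ≤ Lbar * ‖z‖ := by
    intro x' z
    set μ := γ (xbar - z) xbar with hμ
    haveI : IsProbabilityMeasure μ := hγ (xbar - z) xbar
    set u : Ω × Ω → ℝ := fun w => Fhat (x' - z) w.1 - Fhat x' w.2 with hu
    have hum : AEStronglyMeasurable u μ :=
      (((hFmeas _).comp measurable_fst).sub ((hFmeas _).comp measurable_snd)).aestronglyMeasurable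
    have hu2 : Integrable (fun w => u w ^ 2) μ := hsq _ _ _ _
    have hmem2 : MemLp u 2 μ := (memLp_two_iff_integrable_sq hum).2 hu2
    have h1 : Integrable (fun w : Ω × Ω => Fhat (x' - z) w.1) μ := by
      have h := hFint (x' - z) (xbar - z)
      rw [← hfst (xbar - z) xbar] at h
      exact (integrable_map_measure (hFmeas _).aestronglyMeasurable
        measurable_fst.aemeasurable).1 h
    have h2 : Integrable (fun w : Ω × Ω => Fhat x' w.2) μ := by
      have h := hFint x' xbar
      rw [← hsnd (xbar - z) xbar] at h
      exact (integrable_map_measure (hFmeas _).aestronglyMeasurable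
        measurable_snd.aemeasurable).1 h
    have hvals : (∫ w, u w ∂μ)
        = (∫ ω, Fhat (x' - z) ω ∂(D (xbar - z))) - ∫ ω, Fhat x' ω ∂(D xbar) := by
      rw [show (fun w => u w) = fun w : Ω × Ω => Fhat (x' - z) w.1 - Fhat x' w.2 from rfl,
        integral_sub h1 h2]
      congr 1
      · rw [← hfst (xbar - z) xbar,
          integral_map measurable_fst.aemeasurable (hFmeas _).aestronglyMeasurable]
      · rw [← hsnd (xbar - z) xbar,
          integral_map measurable_snd.aemeasurable (hFmeas _).aestronglyMeasurable]
    have hvar := ProbabilityTheory.variance_nonneg u μ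
    rw [ProbabilityTheory.variance_eq_sub hmem2] at hvar
    simp only [Pi.pow_apply] at hvar
    have habs : |∫ w, u w ∂μ| ≤ Real.sqrt (∫ w, u w ^ 2 ∂μ) := by
      rw [← Real.sqrt_sq_eq_abs]
      exact Real.sqrt_le_sqrt (by linarith)
    have hLbound := hL (x' - z) x' (xbar - z) xbar
    have hnorm1 : ‖x' - z - x'‖ = ‖z‖ := by
      rw [show x' - z - x' = -z by abel, norm_neg]
    have hnorm2 : ‖xbar - z - xbar‖ = ‖z‖ := by
      rw [show xbar - z - xbar = -z by abel, norm_neg]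
    rw [hnorm1, hnorm2] at hLbound
    calc |(∫ ω, Fhat (x' - z) ω ∂(D (xbar - z))) - ∫ ω, Fhat x' ω ∂(D xbar)|
        = |∫ w, u w ∂μ| := by rw [hvals]
      _ ≤ Real.sqrt (∫ w, u w ^ 2 ∂μ) := habs
      _ ≤ Lbar / 2 * (‖z‖ + ‖z‖) := hLbound
      _ = Lbar * ‖z‖ := by ring
  -- Step 2: the smoothing estimate.
  have smooth : ∀ x' : EuclideanSpace ℝ (Fin n),
      |(∫ z : EuclideanSpace ℝ (Fin n),
          (∫ ω, Fhat (x' - z) ω ∂(D (xbar - z))) * gaussPdf n η z)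
        - ∫ ω, Fhat x' ω ∂(D xbar)| ≤ Lbar * (η * Real.sqrt (n + 1)) := by
    intro x'
    set c := ∫ ω, Fhat x' ω ∂(D xbar) with hc
    set h : EuclideanSpace ℝ (Fin n) → ℝ :=
      fun z => ∫ ω, Fhat (x' - z) ω ∂(D (xbar - z)) with hh
    have hint1 : Integrable (fun z => h z * gaussPdf n η z) := hGint x'
    have hint2 : Integrable (fun z => c * gaussPdf n η z) :=
      (GaussSmoothAux.integrable_gaussPdf hη).const_mul c
    have hintsub : Integrable (fun z => (h z - c) * gaussPdf n η z) := by
      have : (fun z => (h z - c) * gaussPdf n η z)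
          = fun z => h z * gaussPdf n η z - c * gaussPdf n η z := by
        funext z; ring
      rw [this]; exact hint1.sub hint2
    have e1 : (∫ z, h z * gaussPdf n η z) - c = ∫ z, (h z - c) * gaussPdf n η z := by
      have : (fun z => (h z - c) * gaussPdf n η z)
          = fun z => h z * gaussPdf n η z - c * gaussPdf n η z := by
        funext z; ring
      rw [this, integral_sub hint1 hint2, integral_const_mul,
        GaussSmoothAux.integral_gaussPdf hη, mul_one]
    rw [e1]
    calc |∫ z, (h z - c) * gaussPdf n η z|
        ≤ ∫ z, |h z - c| * |gaussPdf n η z| := by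
          simpa [Real.norm_eq_abs, abs_mul] using norm_integral_le_integral_norm
            (fun z => (h z - c) * gaussPdf n η z)
      _ ≤ ∫ z : EuclideanSpace ℝ (Fin n), Lbar * (‖z‖ * gaussPdf n η z) := by
          refine integral_mono ?_
            ((GaussSmoothAux.integrable_norm_gaussPdf hη).const_mul Lbar) ?_
          · simpa [abs_mul] using hintsub.abs
          · intro z
            simp only
            rw [abs_of_nonneg (GaussSmoothAux.gaussPdf_nonneg z), ← mul_assoc]
            exact mul_le_mul_of_nonneg_right (coupling x' z) (GaussSmoothAux.gaussPdf_nonneg z)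
      _ = Lbar * ∫ z : EuclideanSpace ℝ (Fin n), ‖z‖ * gaussPdf n η z := integral_const_mul _ _
      _ ≤ Lbar * (η * Real.sqrt (n + 1)) :=
          mul_le_mul_of_nonneg_left (GaussSmoothAux.integral_norm_gaussPdf hη) hLbar.le
  -- Step 3: combine.
  intro x hx
  have hs : 0 < Real.sqrt ((n : ℝ) + 1) := Real.sqrt_pos.2 (by positivity)
  have hden : 0 < 2 * Lbar * Real.sqrt ((n : ℝ) + 1) := by positivity
  have hε2 : 2 * (Lbar * (η * Real.sqrt ((n : ℝ) + 1))) ≤ ε := by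
    have h := (le_div_iff₀ hden).1 hηle
    nlinarith
  have A := abs_le.1 (smooth xbar)
  have B := abs_le.1 (smooth x)
  have C := hstable x hx
  linarith [A.1, A.2, B.1, B.2]
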